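/- For every n ∈ ℕ: ∫_{−π}^{π} (V_{2n}(t) − V_n(t))² dt = π·(n + 1/(4n)). -/

import Mathlib

/-!
Summing the Dirichlet kernels gives `V_m(t) = 1/2 + Σ_ν c_m(ν) cos(νt)` with the trapezoidal
multiplier `c_m(ν) = min(2m - ν, m)/m`. Hence `V_{2n} - V_n` is a cosine polynomial whose
coefficients are `0` for `ν ≤ n`, `(ν - n)/n` for `n ≤ ν ≤ 2n` and `(4n - ν)/(2n)` for
`2n ≤ ν ≤ 4n`. By orthogonality of the cosines, the integral of its square is `π` times the sum
of the squared coefficients, and two sums of consecutive squares give `n + 1/(4n)`.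
-/

open Real Finset MeasureTheory

/-- The Dirichlet kernel `D_k(t) = 1/2 + Σ_{ν=1}^{k} cos(νt)`. -/
noncomputable def dirichletK (k : ℕ) (t : ℝ) : ℝ :=
  1 / 2 + ∑ ν ∈ Finset.Icc 1 k, Real.cos ((ν : ℝ) * t)

/-- The de la Vallée Poussin kernel `V_m(t) = (1/m) Σ_{k=m}^{2m−1} D_k(t)`. -/
noncomputable def vallee (m : ℕ) (t : ℝ) : ℝ :=
  (1 / (m : ℝ)) * ∑ k ∈ Finset.Icc m (2 * m - 1), dirichletK k t

theorem integral_cos_int_mul {m : ℤ} (hm : m ≠ 0) : ∫ t in (-π)..π, cos (m * t) = 0 := by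
  rw [intervalIntegral.integral_comp_mul_left cos (Int.cast_ne_zero.mpr hm), integral_cos,
    mul_neg, sin_neg, sin_int_mul_pi]
  simp

theorem integral_cos_mul_cos {j k : ℕ} (hjk : j + k ≠ 0) :
    ∫ t in (-π)..π, cos (j * t) * cos (k * t) = if j = k then π else 0 := by
  have product_to_sum : ∀ t : ℝ, cos (j * t) * cos (k * t)
      = (cos (((j - k : ℤ) : ℝ) * t) + cos (((j + k : ℤ) : ℝ) * t)) / 2 := by
    intro t
    push_cast
    rw [sub_mul, add_mul, cos_sub, cos_add]
    ring
  simp_rw [product_to_sum]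
  rw [intervalIntegral.integral_div, intervalIntegral.integral_add
    (Continuous.intervalIntegrable (by fun_prop) _ _)
    (Continuous.intervalIntegrable (by fun_prop) _ _),
    integral_cos_int_mul (by omega : (j + k : ℤ) ≠ 0)]
  split_ifs with h
  · simp [h]
  · rw [integral_cos_int_mul (by omega : (j - k : ℤ) ≠ 0)]
    simp

theorem integral_sum_cos_sq {s : Finset ℕ} (hs : 0 ∉ s) (c : ℕ → ℝ) :
    ∫ t in (-π)..π, (∑ ν ∈ s, c ν * cos (ν * t)) ^ 2 = π * ∑ ν ∈ s, c ν ^ 2 := by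
  have term : ∀ ν ∈ s, ∀ μ ∈ s,
      ∫ t in (-π)..π, c ν * cos (ν * t) * (c μ * cos (μ * t))
        = if ν = μ then π * c ν ^ 2 else 0 := by
    intro ν hν μ _
    have hνμ : ν + μ ≠ 0 := fun h => hs (Nat.eq_zero_of_add_eq_zero_right h ▸ hν)
    simp_rw [mul_mul_mul_comm (c ν)]
    rw [intervalIntegral.integral_const_mul, integral_cos_mul_cos hνμ]
    split_ifs with h
    · subst h; ring
    · simp
  simp_rw [sq, sum_mul_sum]
  rw [intervalIntegral.integral_finsetSum fun _ _ =>
    Continuous.intervalIntegrable (by fun_prop) _ _, mul_sum]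
  refine sum_congr rfl fun ν hν => ?_
  rw [intervalIntegral.integral_finsetSum fun _ _ =>
    Continuous.intervalIntegrable (by fun_prop) _ _, sum_congr rfl (term ν hν), sum_ite_eq,
    if_pos hν, sq]

theorem sum_Icc_sum_Icc_one_eq_sum_nsmul {M : Type*} [AddCommMonoid M] (f : ℕ → M)
    {a b N : ℕ} (hbN : b ≤ N) :
    ∑ k ∈ Icc a b, ∑ ν ∈ Icc 1 k, f ν = ∑ ν ∈ Icc 1 N, (b + 1 - max a ν) • f ν := by
  rw [sum_comm' (s' := fun ν => Icc (max a ν) b) (t' := Icc 1 N)]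
  · simp only [sum_const, Nat.card_Icc]
  · intro k ν
    simp only [mem_Icc]
    omega

theorem sum_Ioc_sq_sub_bot (a d : ℕ) :
    ∑ ν ∈ Ioc a (a + d), ((ν : ℝ) - a) ^ 2 = d * (d + 1) * (2 * d + 1) / 6 := by
  induction d with
  | zero => simp
  | succ d ih =>
    rw [← add_assoc, sum_Ioc_succ_top (by omega), ih]
    push_cast
    ring

theorem sum_Ioc_sq_top_sub (a d : ℕ) :
    ∑ ν ∈ Ioc a (a + d), (((a + d : ℕ) : ℝ) - ν) ^ 2 = (d - 1) * d * (2 * d - 1) / 6 := by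
  induction d generalizing a with
  | zero => simp
  | succ d ih =>
    rw [← sum_Ioc_consecutive _ (Nat.le_succ a) (by omega), Nat.Ioc_succ_singleton, sum_singleton,
      show a + (d + 1) = a + 1 + d by ring, ih]
    push_cast
    ring

/-- The trapezoidal multiplier of `cos (ν t)` in `vallee m t`; truncated subtraction makes it vanish
for `ν ≥ 2 m`. -/
noncomputable def valleeCoeff (m ν : ℕ) : ℝ := (min (2 * m - ν) m : ℕ) / m

theorem vallee_eq_half_add_sum_cos {m N : ℕ} (hm : m ≠ 0) (hN : 2 * m - 1 ≤ N) (t : ℝ) :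
    vallee m t = 1 / 2 + ∑ ν ∈ Icc 1 N, valleeCoeff m ν * cos (ν * t) := by
  have hcount : ∀ ν, 2 * m - 1 + 1 - max m ν = min (2 * m - ν) m := fun ν => by omega
  have hcard : 2 * m - 1 + 1 - m = m := by omega
  simp only [vallee, dirichletK, sum_add_distrib, sum_Icc_sum_Icc_one_eq_sum_nsmul _ hN, hcount,
    sum_const, Nat.card_Icc, hcard, valleeCoeff, nsmul_eq_mul, mul_add, mul_sum]
  congr 1
  · field_simp
  · exact sum_congr rfl fun ν _ => by ring

theorem valleeCoeff_of_le {m ν : ℕ} (hm : m ≠ 0) (h : ν ≤ m) : valleeCoeff m ν = 1 := by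
  rw [valleeCoeff, min_eq_right (by omega), div_self (by exact_mod_cast hm)]

theorem valleeCoeff_of_le_of_le {m ν : ℕ} (h₁ : m ≤ ν) (h₂ : ν ≤ 2 * m) :
    valleeCoeff m ν = (2 * m - ν) / m := by
  rw [valleeCoeff, min_eq_left (by omega), Nat.cast_sub h₂]
  push_cast; rfl

theorem valleeCoeff_of_two_mul_le {m ν : ℕ} (h : 2 * m ≤ ν) : valleeCoeff m ν = 0 := by
  simp [valleeCoeff, Nat.sub_eq_zero_of_le h]

theorem sum_sq_valleeCoeff_two_mul_sub {n : ℕ} (hn : n ≠ 0) :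
    ∑ ν ∈ Icc 1 (4 * n), (valleeCoeff (2 * n) ν - valleeCoeff n ν) ^ 2 = n + 1 / (4 * n) := by
  have hn' : (n : ℝ) ≠ 0 := by exact_mod_cast hn
  have flat : ∑ ν ∈ Ioc 0 n, (valleeCoeff (2 * n) ν - valleeCoeff n ν) ^ 2 = 0 :=
    sum_eq_zero fun ν hν => by
      rw [mem_Ioc] at hν
      rw [valleeCoeff_of_le (by omega) (by omega), valleeCoeff_of_le hn hν.2]
      norm_num
  have rising : ∑ ν ∈ Ioc n (2 * n), (valleeCoeff (2 * n) ν - valleeCoeff n ν) ^ 2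
      = (n * (n + 1) * (2 * n + 1) / 6) / n ^ 2 := by
    rw [← sum_Ioc_sq_sub_bot, ← two_mul, sum_div]
    refine sum_congr rfl fun ν hν => ?_
    rw [mem_Ioc] at hν
    rw [valleeCoeff_of_le (by omega) (by omega), valleeCoeff_of_le_of_le (by omega) (by omega)]
    field_simp
    ring
  have falling : ∑ ν ∈ Ioc (2 * n) (4 * n), (valleeCoeff (2 * n) ν - valleeCoeff n ν) ^ 2
      = ((2 * n - 1) * (2 * n) * (2 * (2 * n) - 1) / 6) / (2 * n) ^ 2 := by
    have h := sum_Ioc_sq_top_sub (2 * n) (2 * n)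
    rw [show 2 * n + 2 * n = 4 * n by ring] at h
    push_cast at h
    rw [← h, sum_div]
    refine sum_congr rfl fun ν hν => ?_
    rw [mem_Ioc] at hν
    rw [valleeCoeff_of_le_of_le (by omega) (by omega), valleeCoeff_of_two_mul_le (by omega)]
    push_cast
    field_simp
    ring
  rw [show Icc 1 (4 * n) = Ioc 0 (4 * n) by ext; simp only [mem_Icc, mem_Ioc]; omega,
    ← sum_Ioc_consecutive _ (Nat.zero_le (2 * n)) (by omega),
    ← sum_Ioc_consecutive _ (Nat.zero_le n) (by omega), flat, rising, falling]
  field_simp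
  ring

/-- For every `n ≥ 1`: `∫_{−π}^{π} (V_{2n}(t) − V_n(t))² dt = π·(n + 1/(4n))`. -/
theorem vallee_diff_sq_integral (n : ℕ) (hn : 1 ≤ n) :
    ∫ t in (-π)..π, (vallee (2 * n) t - vallee n t) ^ 2 = π * ((n : ℝ) + 1 / (4 * n)) := by
  have hn₀ : n ≠ 0 := by omega
  have hdiff : ∀ t, vallee (2 * n) t - vallee n t
      = ∑ ν ∈ Icc 1 (4 * n), (valleeCoeff (2 * n) ν - valleeCoeff n ν) * cos (ν * t) := by
    intro t
    rw [vallee_eq_half_add_sum_cos (N := 4 * n) (by omega) (by omega),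
      vallee_eq_half_add_sum_cos (N := 4 * n) hn₀ (by omega), add_sub_add_left_eq_sub,
      ← sum_sub_distrib]
    simp only [sub_mul]
  simp_rw [hdiff]
  rw [integral_sum_cos_sq (by simp), sum_sq_valleeCoeff_two_mul_sub hn₀]
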